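/- Let H be a group that is δ-hyperbolic with respect to a finite generating set S, and let g ∈ H be an element of infinite order. There exists a constant μ ≥ 0, given by a computable function of δ, ♯S and |g|, such that for all natural numbers s, t one has |g^{s+t}| ≥ |g^s| + |g^t| − 2μ. -/

import Mathlib

variable {G : Type*} [Group G]

/-- Word length of `g` with respect to a generating set `S`: the least number of
letters from `S ∪ S⁻¹` whose product is `g`. -/
noncomputable def wlen (S : Set G) (g : G) : ℕ :=
  sInf {n : ℕ | ∃ L : List G, (∀ x ∈ L, x ∈ S ∨ x⁻¹ ∈ S) ∧ L.length = n ∧ L.prod = g}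

/-- A discrete geodesic from `a` to `b` in the Cayley graph of `G` w.r.t. `S`:
the sequence of vertices visited by a geodesic path. -/
def IsDGeodesic (S : Set G) (a b : G) (p : ℕ → G) : Prop :=
  p 0 = a ∧ p (wlen S (a⁻¹ * b)) = b ∧
    ∀ i ≤ wlen S (a⁻¹ * b), ∀ j ≤ wlen S (a⁻¹ * b),
      wlen S ((p i)⁻¹ * p j) = Nat.dist i j

/-- `G` is `δ`-hyperbolic with respect to `S`: every geodesic triangle in the
Cayley graph `Γ(G,S)` is `δ`-thin, rendered on the vertex set. -/
def GroupHyperbolic (S : Set G) (δ : ℝ) : Prop :=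
  ∀ a b c : G, ∀ p q : ℕ → G, IsDGeodesic S a b p → IsDGeodesic S a c q →
    ∀ i : ℕ,
      (i : ℝ) ≤ ((wlen S (a⁻¹ * b) : ℝ) + (wlen S (a⁻¹ * c) : ℝ)
          - (wlen S (b⁻¹ * c) : ℝ)) / 2 →
      (wlen S ((p i)⁻¹ * q i) : ℝ) ≤ δ

/-!
Write `D = ⌊δ⌋₊`. If `y` is long (`|y| ≥ 5D + 5`) and almost straight (`2|y| ≤ |y²| + 2D + 2`),
the four-point condition gives, by induction along the powers of `y`,
`|y^s| + |y^t| ≤ |y^(s+t)| + 6D + 6`. Such a `y` is a conjugate `u⁻¹ g^k u` as soon as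
`|g^(2k)| > |g^k| + 6D + 4`: take `u` on a geodesic `[1, g^k]` at depth `(g^(-k) | g^k)₁`.
The bound passes back to `g` at a cost of `O(k |g|)`, so it remains to find such a `k` of
computable size.

For large `k`, the drift `s ↦ |g^(s+k)| - |g^k|` is additive up to `6D`. If every
`σ ≤ (2♯S + 1)^(8D)` had drift at most `6D`, the conjugates of the `g^σ` by the midpoint of
`[1, g^k]` would be distinct points of a ball of radius `8D`, which is too small. So some such `σ`
has drift larger than `6D`, and `|g^(jσ)| ≥ j`. Hence the lengths `|g^(2^i σ)|` cannot grow by at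
most `6D + 4` at every doubling, and the first doubling where they do grow more gives `k = 2^i σ`.
-/

variable {S : Set G} {D : ℕ}

lemma wlen_le_length {L : List G} (hL : ∀ x ∈ L, x ∈ S ∨ x⁻¹ ∈ S) :
    wlen S L.prod ≤ L.length :=
  Nat.sInf_le ⟨L, hL, rfl, rfl⟩

lemma exists_list_length_eq_wlen (hS : Subgroup.closure S = ⊤) (g : G) :
    ∃ L : List G, (∀ x ∈ L, x ∈ S ∨ x⁻¹ ∈ S) ∧ L.length = wlen S g ∧ L.prod = g := by
  refine Nat.sInf_mem (s := {n | ∃ L : List G, (∀ x ∈ L, x ∈ S ∨ x⁻¹ ∈ S) ∧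
    L.length = n ∧ L.prod = g}) ?_
  have hg : g ∈ (Subgroup.closure S).toSubmonoid := by simp [hS]
  rw [Subgroup.closure_toSubmonoid] at hg
  obtain ⟨L, hL, rfl⟩ := Submonoid.exists_list_of_mem_closure hg
  exact ⟨L.length, L, fun x hx => by simpa using hL x hx, rfl, rfl⟩

@[simp] lemma wlen_one : wlen S (1 : G) = 0 :=
  Nat.le_zero.1 (wlen_le_length (L := []) (by simp))

lemma eq_one_of_wlen_eq_zero (hS : Subgroup.closure S = ⊤) {g : G} (hg : wlen S g = 0) :
    g = 1 := by
  obtain ⟨L, -, hL, rfl⟩ := exists_list_length_eq_wlen hS g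
  rw [hg, List.length_eq_zero_iff] at hL
  simp [hL]

lemma wlen_le_one {x : G} (hx : x ∈ S ∨ x⁻¹ ∈ S) : wlen S x ≤ 1 := by
  simpa using wlen_le_length (L := [x]) (by simpa using hx)

lemma wlen_mul_le (hS : Subgroup.closure S = ⊤) (a b : G) :
    wlen S (a * b) ≤ wlen S a + wlen S b := by
  obtain ⟨L, hL, hLa, rfl⟩ := exists_list_length_eq_wlen hS a
  obtain ⟨M, hM, hMb, rfl⟩ := exists_list_length_eq_wlen hS b
  rw [← hLa, ← hMb, ← List.length_append, ← List.prod_append]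
  exact wlen_le_length (by simpa [or_imp, forall_and] using And.intro hL hM)

lemma wlen_inv (hS : Subgroup.closure S = ⊤) (a : G) : wlen S a⁻¹ = wlen S a := by
  suffices h : ∀ b : G, wlen S b⁻¹ ≤ wlen S b from le_antisymm (h a) (by simpa using h a⁻¹)
  intro b
  obtain ⟨L, hL, hLb, rfl⟩ := exists_list_length_eq_wlen hS b
  rw [← hLb, List.prod_inv_reverse]
  refine (wlen_le_length ?_).trans (by simp)
  intro x hx
  simp only [List.mem_reverse, List.mem_map] at hx
  obtain ⟨y, hy, rfl⟩ := hx
  simpa [or_comm] using hL y hy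

lemma wlen_inv_mul_comm (hS : Subgroup.closure S = ⊤) (a b : G) :
    wlen S (a⁻¹ * b) = wlen S (b⁻¹ * a) := by
  rw [← wlen_inv hS, mul_inv_rev, inv_inv]

lemma wlen_inv_mul_le (hS : Subgroup.closure S = ⊤) (a b c : G) :
    wlen S (a⁻¹ * c) ≤ wlen S (a⁻¹ * b) + wlen S (b⁻¹ * c) := by
  simpa [mul_assoc] using wlen_mul_le hS (a⁻¹ * b) (b⁻¹ * c)

lemma wlen_pow_le (hS : Subgroup.closure S = ⊤) (g : G) (n : ℕ) :
    wlen S (g ^ n) ≤ n * wlen S g := by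
  induction n with
  | zero => simp
  | succ n ih =>
    rw [pow_succ, add_one_mul]
    exact (wlen_mul_le hS _ _).trans (by omega)

lemma wlen_pow_add_le (hS : Subgroup.closure S = ⊤) (g : G) (m n : ℕ) :
    wlen S (g ^ (m + n)) ≤ wlen S (g ^ m) + wlen S (g ^ n) := by
  rw [pow_add]; exact wlen_mul_le hS _ _

lemma wlen_pow_le_add (hS : Subgroup.closure S = ⊤) (g : G) (m n : ℕ) :
    wlen S (g ^ n) ≤ wlen S (g ^ m) + wlen S (g ^ (m + n)) := by
  simpa [wlen_inv hS, pow_add] using wlen_mul_le hS (g ^ m)⁻¹ (g ^ (m + n))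

lemma wlen_conj_le (hS : Subgroup.closure S = ⊤) (u x : G) :
    wlen S (u⁻¹ * x * u) ≤ wlen S x + 2 * wlen S u := by
  have h₁ := wlen_mul_le hS (u⁻¹ * x) u
  have h₂ := wlen_mul_le hS u⁻¹ x
  rw [wlen_inv hS] at h₂
  omega

lemma wlen_le_conj (hS : Subgroup.closure S = ⊤) (u x : G) :
    wlen S x ≤ wlen S (u⁻¹ * x * u) + 2 * wlen S u := by
  simpa [mul_assoc, wlen_inv hS] using wlen_conj_le hS u⁻¹ (u⁻¹ * x * u)

lemma exists_wlen_mul_inv_le (hS : Subgroup.closure S = ⊤) {g : G} {r : ℕ}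
    (hg : wlen S g ≤ r + 1) : ∃ x, (x = 1 ∨ x ∈ S ∨ x⁻¹ ∈ S) ∧ wlen S (g * x⁻¹) ≤ r := by
  by_cases hr : wlen S g ≤ r
  · exact ⟨1, Or.inl rfl, by simpa using hr⟩
  obtain ⟨L, hL, hLg, rfl⟩ := exists_list_length_eq_wlen hS g
  obtain ⟨L, x, rfl⟩ : ∃ L' x, L = L' ++ [x] := by
    rcases List.eq_nil_or_concat' L with rfl | h
    · simp at hr
    · exact h
  refine ⟨x, Or.inr (hL x (by simp)), ?_⟩
  have := wlen_le_length (L := L) fun y hy => hL y (by simp [hy])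
  simp only [List.length_append, List.length_singleton] at hLg
  simpa using this.trans (by omega)

open scoped Pointwise in
lemma exists_finset_wlen_le (hfin : S.Finite) (hS : Subgroup.closure S = ⊤) (r : ℕ) :
    ∃ B : Finset G, (∀ g, wlen S g ≤ r → g ∈ B) ∧ B.card ≤ (2 * S.ncard + 1) ^ r := by
  classical
  induction r with
  | zero => exact ⟨{1}, fun g hg => by simpa using eq_one_of_wlen_eq_zero hS (by omega), by simp⟩
  | succ r ih =>
    obtain ⟨B, hB, hBcard⟩ := ih
    set A : Finset G := insert 1 (hfin.toFinset ∪ hfin.toFinset⁻¹)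
    have hAcard : A.card ≤ 2 * S.ncard + 1 := by
      calc A.card ≤ (hfin.toFinset ∪ hfin.toFinset⁻¹).card + 1 := Finset.card_insert_le _ _
        _ ≤ hfin.toFinset.card + hfin.toFinset⁻¹.card + 1 := by
          gcongr; exact Finset.card_union_le _ _
        _ = 2 * S.ncard + 1 := by rw [Finset.card_inv, ← Set.ncard_eq_toFinset_card S hfin]; ring
    refine ⟨B * A, fun g hg => ?_, ?_⟩
    · obtain ⟨x, hx, hgx⟩ := exists_wlen_mul_inv_le hS hg
      refine Finset.mem_mul.2 ⟨g * x⁻¹, hB _ hgx, x, ?_, by group⟩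
      simpa [A, Finset.mem_inv] using hx
    · calc (B * A).card ≤ B.card * A.card := Finset.card_mul_le
        _ ≤ (2 * S.ncard + 1) ^ r * (2 * S.ncard + 1) := Nat.mul_le_mul hBcard hAcard
        _ = (2 * S.ncard + 1) ^ (r + 1) := (pow_succ _ _).symm

lemma exists_lt_wlen_pow (hfin : S.Finite) (hS : Subgroup.closure S = ⊤) {g : G}
    (hg : ¬IsOfFinOrder g) (X : ℕ) : ∃ k, X < wlen S (g ^ k) := by
  by_contra! hX
  obtain ⟨B, hB, -⟩ := exists_finset_wlen_le hfin hS X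
  refine Set.infinite_range_of_injective (injective_pow_iff_not_isOfFinOrder.2 hg)
    (B.finite_toSet.subset ?_)
  rintro _ ⟨k, rfl⟩
  exact hB _ (hX k)

lemma wlen_inv_mul_le_dist (hS : Subgroup.closure S = ⊤) {p : ℕ → G}
    (hstep : ∀ i, wlen S ((p i)⁻¹ * p (i + 1)) ≤ 1) (i j : ℕ) :
    wlen S ((p i)⁻¹ * p j) ≤ Nat.dist i j := by
  wlog hij : i ≤ j generalizing i j
  · rw [wlen_inv_mul_comm hS, Nat.dist_comm]; exact this j i (by omega)
  rw [Nat.dist_eq_sub_of_le hij]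
  induction j, hij using Nat.le_induction with
  | base => simp
  | succ j hij ih =>
    have := wlen_inv_mul_le hS (p i) (p j) (p (j + 1))
    have := hstep j
    omega

lemma isDGeodesic_of_wlen_le_dist (hS : Subgroup.closure S = ⊤) {a b : G} {p : ℕ → G}
    (h0 : p 0 = a) (hn : p (wlen S (a⁻¹ * b)) = b)
    (hlip : ∀ i j, wlen S ((p i)⁻¹ * p j) ≤ Nat.dist i j) : IsDGeodesic S a b p := by
  refine ⟨h0, hn, fun i hi j hj => le_antisymm (hlip i j) ?_⟩
  wlog hij : i ≤ j generalizing i j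
  · rw [wlen_inv_mul_comm hS, Nat.dist_comm]; exact this j hj i hi (by omega)
  -- the endpoints are at distance `wlen S (a⁻¹ * b)`, so no shortcut between `p i` and `p j`
  have h₁ := wlen_inv_mul_le hS a (p i) b
  have h₂ := wlen_inv_mul_le hS (p i) (p j) b
  have h₃ := hlip 0 i
  have h₄ := hlip j (wlen S (a⁻¹ * b))
  rw [h0] at h₃
  rw [hn] at h₄
  simp only [Nat.dist] at h₃ h₄ ⊢
  omega

lemma exists_isDGeodesic (hS : Subgroup.closure S = ⊤) (a b : G) :
    ∃ p : ℕ → G, IsDGeodesic S a b p := by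
  obtain ⟨L, hL, hLab, hprod⟩ := exists_list_length_eq_wlen hS (a⁻¹ * b)
  refine ⟨fun i => a * (L.take i).prod,
    isDGeodesic_of_wlen_le_dist hS (by simp) ?_ (wlen_inv_mul_le_dist hS fun i => ?_)⟩
  · simp [← hLab, hprod]
  · by_cases hi : i < L.length
    · simpa [List.prod_take_succ L i hi, mul_assoc] using wlen_le_one (hL _ (L.getElem_mem hi))
    · simp [List.take_of_length_le (not_lt.1 hi),
        List.take_of_length_le (show L.length ≤ i + 1 by omega)]

lemma IsDGeodesic.mul_left {a b : G} {p : ℕ → G} (hp : IsDGeodesic S a b p) (c : G) :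
    IsDGeodesic S (c * a) (c * b) (fun i => c * p i) := by
  obtain ⟨h0, hn, hd⟩ := hp
  have hw : (c * a)⁻¹ * (c * b) = a⁻¹ * b := by group
  refine ⟨by simp [h0], by simp [hn], ?_⟩
  simpa [hw, mul_assoc] using hd

lemma IsDGeodesic.reverse (hS : Subgroup.closure S = ⊤) {a b : G} {p : ℕ → G}
    (hp : IsDGeodesic S a b p) :
    IsDGeodesic S b a (fun i => p (wlen S (a⁻¹ * b) - i)) := by
  obtain ⟨h0, hn, hd⟩ := hp
  rw [IsDGeodesic, wlen_inv_mul_comm hS b a]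
  refine ⟨by simpa using hn, by simpa using h0, fun i hi j hj => ?_⟩
  rw [hd _ (by omega) _ (by omega)]
  simp only [Nat.dist]
  omega

lemma IsDGeodesic.wlen_inv_mul_right {a b : G} {p : ℕ → G} (hp : IsDGeodesic S a b p) {i : ℕ}
    (hi : i ≤ wlen S (a⁻¹ * b)) : wlen S ((p i)⁻¹ * b) = wlen S (a⁻¹ * b) - i := by
  obtain ⟨-, hn, hd⟩ := hp
  conv_lhs => rw [← hn]
  rw [hd i hi _ le_rfl, Nat.dist_eq_sub_of_le hi]

lemma IsDGeodesic.wlen_inv_mul_eq_dist {b : G} {p : ℕ → G} (hp : IsDGeodesic S 1 b p)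
    {i j : ℕ} (hi : i ≤ wlen S b) (hj : j ≤ wlen S b) : wlen S ((p i)⁻¹ * p j) = Nat.dist i j :=
  hp.2.2 i (by simpa using hi) j (by simpa using hj)

lemma IsDGeodesic.wlen_eq {b : G} {p : ℕ → G} (hp : IsDGeodesic S 1 b p) {i : ℕ}
    (hi : i ≤ wlen S b) : wlen S (p i) = i := by
  simpa [hp.1, Nat.dist_zero_left] using hp.wlen_inv_mul_eq_dist (Nat.zero_le _) hi

lemma IsDGeodesic.inv_mul_reverse (hS : Subgroup.closure S = ⊤) {x : G} {p : ℕ → G}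
    (hp : IsDGeodesic S 1 x p) : IsDGeodesic S 1 x⁻¹ (fun i => x⁻¹ * p (wlen S x - i)) := by
  simpa using (hp.mul_left x⁻¹).reverse hS

lemma GroupHyperbolic.natFloor {δ : ℝ} (h : GroupHyperbolic S δ) :
    GroupHyperbolic S (⌊δ⌋₊ : ℝ) :=
  fun a b c p q hp hq i hi => by exact_mod_cast Nat.le_floor (h a b c p q hp hq i hi)

lemma GroupHyperbolic.thin (hD : GroupHyperbolic S D) {a b c : G} {p q : ℕ → G}
    (hp : IsDGeodesic S a b p) (hq : IsDGeodesic S a c q) {i : ℕ}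
    (hi : 2 * i + wlen S (b⁻¹ * c) ≤ wlen S (a⁻¹ * b) + wlen S (a⁻¹ * c)) :
    wlen S ((p i)⁻¹ * q i) ≤ D := by
  have hi' : (2 * i + wlen S (b⁻¹ * c) : ℝ) ≤ wlen S (a⁻¹ * b) + wlen S (a⁻¹ * c) := by
    exact_mod_cast hi
  exact_mod_cast hD a b c p q hp hq i (by linarith)

lemma GroupHyperbolic.thin_end (hS : Subgroup.closure S = ⊤) (hD : GroupHyperbolic S D)
    {a b c : G} {p q : ℕ → G} (hp : IsDGeodesic S a c p) (hq : IsDGeodesic S b c q) {i : ℕ}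
    (hi : 2 * i + wlen S (a⁻¹ * b) ≤ wlen S (a⁻¹ * c) + wlen S (b⁻¹ * c)) :
    wlen S ((p (wlen S (a⁻¹ * c) - i))⁻¹ * q (wlen S (b⁻¹ * c) - i)) ≤ D := by
  refine hD.thin (hp.reverse hS) (hq.reverse hS) ?_
  rwa [wlen_inv_mul_comm hS c a, wlen_inv_mul_comm hS c b]

/-- Gromov products based at `w` satisfy `(x|z) ≥ min((x|u), (u|z)) - δ`. -/
lemma GroupHyperbolic.four_point (hS : Subgroup.closure S = ⊤) (hD : GroupHyperbolic S D)
    (w x u z : G) {i : ℕ}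
    (h₁ : 2 * i + wlen S (x⁻¹ * u) ≤ wlen S (w⁻¹ * x) + wlen S (w⁻¹ * u))
    (h₂ : 2 * i + wlen S (u⁻¹ * z) ≤ wlen S (w⁻¹ * u) + wlen S (w⁻¹ * z)) :
    2 * i + wlen S (x⁻¹ * z) ≤ wlen S (w⁻¹ * x) + wlen S (w⁻¹ * z) + 2 * D := by
  obtain ⟨p, hp⟩ := exists_isDGeodesic hS w x
  obtain ⟨q, hq⟩ := exists_isDGeodesic hS w u
  obtain ⟨r, hr⟩ := exists_isDGeodesic hS w z
  have hix : i ≤ wlen S (w⁻¹ * x) := by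
    have := wlen_inv_mul_le hS w x u
    omega
  have hiz : i ≤ wlen S (w⁻¹ * z) := by
    have := wlen_inv_mul_le hS w z u
    rw [wlen_inv_mul_comm hS z u] at this
    omega
  have hpq := hD.thin hp hq h₁
  have hqr := hD.thin hq hr h₂
  have hxp := hp.wlen_inv_mul_right hix
  have hrz := hr.wlen_inv_mul_right hiz
  rw [wlen_inv_mul_comm hS] at hxp
  have := wlen_inv_mul_le hS x (p i) z
  have := wlen_inv_mul_le hS (p i) (q i) z
  have := wlen_inv_mul_le hS (q i) (r i) z
  omega

lemma wlen_pow_inv_mul_pow (hS : Subgroup.closure S = ⊤) (y : G) (a b : ℕ) :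
    wlen S ((y ^ a)⁻¹ * y ^ b) = wlen S (y ^ Nat.dist a b) := by
  wlog hab : a ≤ b generalizing a b
  · rw [wlen_inv_mul_comm hS, Nat.dist_comm]; exact this b a (by omega)
  obtain ⟨c, rfl⟩ := Nat.exists_eq_add_of_le hab
  simp [pow_add, Nat.dist_eq_sub_of_le hab]

lemma wlen_pow_add_wlen_le (hS : Subgroup.closure S = ⊤) (hD : GroupHyperbolic S D) {y : G}
    (hlong : 4 * D + 4 ≤ wlen S y) (hsq : 2 * wlen S y ≤ wlen S (y ^ 2) + 2 * D + 2) (r : ℕ) :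
    wlen S (y ^ r) + wlen S y ≤ wlen S (y ^ (r + 1)) + (4 * D + 4) := by
  induction r with
  | zero => simp
  | succ r ih =>
    by_contra! hcon
    rw [show r + 1 + 1 = r + 2 from rfl] at hcon
    have h := hD.four_point (i := 2 * D + 2) hS (y ^ (r + 1)) (y ^ r) (y ^ 0) (y ^ (r + 2))
    simp only [wlen_pow_inv_mul_pow hS, Nat.dist, tsub_zero, zero_tsub, add_zero,
      add_tsub_cancel_left, Nat.sub_eq_zero_of_le, pow_one, zero_add, Nat.reduceSubDiff,
      le_add_iff_nonneg_right, zero_le] at h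
    have := h (by omega) (by omega)
    omega

lemma wlen_pow_add_wlen_pow_le (hS : Subgroup.closure S = ⊤) (hD : GroupHyperbolic S D) {y : G}
    (hlong : 5 * D + 5 ≤ wlen S y) (hsq : 2 * wlen S y ≤ wlen S (y ^ 2) + 2 * D + 2) (s t : ℕ) :
    wlen S (y ^ s) + wlen S (y ^ t) ≤ wlen S (y ^ (s + t)) + (6 * D + 6) := by
  obtain rfl | ht₀ := Nat.eq_zero_or_pos t
  · simp
  by_contra! hcon
  have hs := wlen_pow_add_wlen_le hS hD (by omega) hsq s
  have ht := wlen_pow_add_wlen_le hS hD (by omega) hsq (t - 1)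
  rw [Nat.sub_add_cancel ht₀] at ht
  have h := hD.four_point (i := 3 * D + 3) hS (y ^ s) (y ^ 0) (y ^ (s + t)) (y ^ (s + 1))
  simp only [wlen_pow_inv_mul_pow hS, Nat.dist, zero_tsub, tsub_zero, zero_add, add_zero,
    add_tsub_cancel_left, Nat.sub_eq_zero_of_le, pow_one, le_add_iff_nonneg_right, zero_le] at h
  rw [show s + t - (s + 1) + (s + 1 - (s + t)) = t - 1 by omega] at h
  have := h (by omega) (by omega)
  omega

/-- `u` is the point of a geodesic `[1, x]` at depth `(x⁻¹ | x)₁`. -/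
lemma exists_conj_straight (hS : Subgroup.closure S = ⊤) (hD : GroupHyperbolic S D) {x : G}
    (hx : wlen S x + (6 * D + 4) < wlen S (x ^ 2)) :
    ∃ u : G, wlen S u ≤ wlen S x ∧ 5 * D + 5 ≤ wlen S (u⁻¹ * x * u) ∧
      2 * wlen S (u⁻¹ * x * u) ≤ wlen S ((u⁻¹ * x * u) ^ 2) + 2 * D + 2 := by
  have hx₂ : wlen S (x ^ 2) ≤ 2 * wlen S x := by
    simpa [sq, two_mul] using wlen_mul_le hS x x
  set i := (2 * wlen S x - wlen S (x ^ 2)) / 2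
  obtain ⟨Q, hQ⟩ := exists_isDGeodesic hS 1 x
  set u := Q i
  set v := Q (wlen S x - i)
  have hu : wlen S u = i := hQ.wlen_eq (by omega)
  have huv : wlen S (u⁻¹ * v) = wlen S x - 2 * i := by
    rw [hQ.wlen_inv_mul_eq_dist (by omega) (by omega), Nat.dist_eq_sub_of_le (by omega)]
    omega
  have hvxu : wlen S (v⁻¹ * x * u) ≤ D := by
    have h := hD.thin hQ (hQ.inv_mul_reverse hS) (i := i) (by
      simp only [inv_one, one_mul, wlen_inv hS, show x⁻¹ * x⁻¹ = (x ^ 2)⁻¹ by group]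
      omega)
    rwa [← wlen_inv hS, mul_inv_rev, mul_inv_rev, inv_inv, inv_inv] at h
  have hy : wlen S (u⁻¹ * x * u) ≤ wlen S (u⁻¹ * v) + D := by
    have := wlen_mul_le hS (u⁻¹ * v) (v⁻¹ * x * u)
    rw [show u⁻¹ * v * (v⁻¹ * x * u) = u⁻¹ * x * u by group] at this
    omega
  have hy' : wlen S (u⁻¹ * v) ≤ wlen S (u⁻¹ * x * u) + D := by
    have := wlen_mul_le hS (u⁻¹ * x * u) (v⁻¹ * x * u)⁻¹
    rw [wlen_inv hS, show u⁻¹ * x * u * (v⁻¹ * x * u)⁻¹ = u⁻¹ * v by group] at this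
    omega
  have hy₂ : wlen S (x ^ 2) ≤ wlen S ((u⁻¹ * x * u) ^ 2) + 2 * i := by
    have := wlen_le_conj hS u (x ^ 2)
    rwa [hu, show u⁻¹ * x ^ 2 * u = (u⁻¹ * x * u) ^ 2 by simp [sq, mul_assoc]] at this
  refine ⟨u, by omega, by omega, by omega⟩

/-- `g ^ s` shifts `[1, g ^ k]` along itself by the drift `|g ^ (s + k)| - |g ^ k|`, since the
triangle `1, g ^ k, g ^ (s + k)` is thin at both of its ends `1` and `g ^ (s + k)`. -/
lemma GroupHyperbolic.wlen_inv_mul_pow_mul_le (hS : Subgroup.closure S = ⊤)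
    (hD : GroupHyperbolic S D) {g : G} {k s u : ℕ} {Q : ℕ → G}
    (hQ : IsDGeodesic S 1 (g ^ k) Q) (hs : wlen S (g ^ s) ≤ u)
    (hu : u + wlen S (g ^ s) ≤ wlen S (g ^ k)) :
    wlen S ((Q u)⁻¹ * (g ^ s * Q (u + wlen S (g ^ k) - wlen S (g ^ (s + k))))) ≤ 2 * D := by
  have h₁ := wlen_pow_add_le hS g s k
  have h₂ := wlen_pow_le_add hS g s k
  have hsk : (g ^ s)⁻¹ * g ^ (s + k) = g ^ k := by rw [pow_add, inv_mul_cancel_left]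
  have hks : (g ^ k)⁻¹ * g ^ (s + k) = g ^ s := by
    rw [add_comm, pow_add, inv_mul_cancel_left]
  obtain ⟨Q', hQ'⟩ := exists_isDGeodesic hS 1 (g ^ (s + k))
  have hP : IsDGeodesic S (g ^ s) (g ^ (s + k)) (fun i => g ^ s * Q i) := by
    simpa [pow_add] using hQ.mul_left (g ^ s)
  have hstart : wlen S ((Q u)⁻¹ * Q' u) ≤ D :=
    hD.thin hQ hQ' (by simp only [inv_one, one_mul, hks]; omega)
  have hend := hD.thin_end hS hP hQ' (i := wlen S (g ^ (s + k)) - u)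
    (by simp only [inv_one, one_mul, mul_one, wlen_inv hS, hsk]; omega)
  simp only [inv_one, one_mul, hsk] at hend
  rw [show wlen S (g ^ k) - (wlen S (g ^ (s + k)) - u) =
      u + wlen S (g ^ k) - wlen S (g ^ (s + k)) by omega,
    show wlen S (g ^ (s + k)) - (wlen S (g ^ (s + k)) - u) = u by omega] at hend
  have := wlen_inv_mul_le hS (Q u) (Q' u) (g ^ s * Q (u + wlen S (g ^ k) - wlen S (g ^ (s + k))))
  rw [wlen_inv_mul_comm hS (Q' u)] at this
  omega

lemma GroupHyperbolic.abs_wlen_pow_add_sub_le (hS : Subgroup.closure S = ⊤)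
    (hD : GroupHyperbolic S D) (g : G) {k s s' : ℕ}
    (hk : 2 * (wlen S (g ^ s) + wlen S (g ^ s')) ≤ wlen S (g ^ k)) :
    |(wlen S (g ^ (s + k)) + wlen S (g ^ (s' + k)) : ℤ) -
      (wlen S (g ^ k) + wlen S (g ^ (s + s' + k)))| ≤ 6 * D := by
  obtain ⟨Q, hQ⟩ := exists_isDGeodesic hS 1 (g ^ k)
  have := wlen_pow_add_le hS g s s'
  have := wlen_pow_add_le hS g s k
  have := wlen_pow_le_add hS g s k
  have := wlen_pow_add_le hS g s' k
  have := wlen_pow_le_add hS g s' k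
  have := wlen_pow_add_le hS g (s + s') k
  have := wlen_pow_le_add hS g (s + s') k
  -- move the midpoint of `Q` by `g ^ (s + s')` directly, and by `g ^ s` then `g ^ s'`
  have ha := hD.wlen_inv_mul_pow_mul_le hS hQ (s := s + s') (u := wlen S (g ^ k) / 2)
    (by omega) (by omega)
  have hb := hD.wlen_inv_mul_pow_mul_le hS hQ (s := s) (u := wlen S (g ^ k) / 2)
    (by omega) (by omega)
  have hc := hD.wlen_inv_mul_pow_mul_le hS hQ (s := s')
    (u := wlen S (g ^ k) / 2 + wlen S (g ^ k) - wlen S (g ^ (s + k))) (by omega) (by omega)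
  set m := wlen S (g ^ k) / 2
  set a := m + wlen S (g ^ k) - wlen S (g ^ (s + s' + k))
  set b := m + wlen S (g ^ k) - wlen S (g ^ (s + k))
  set c := b + wlen S (g ^ k) - wlen S (g ^ (s' + k))
  have hac : wlen S ((Q a)⁻¹ * Q c) ≤ 6 * D := by
    have e : (Q a)⁻¹ * Q c = ((Q m)⁻¹ * (g ^ (s + s') * Q a))⁻¹ *
        (((Q m)⁻¹ * (g ^ s * Q b)) * ((Q b)⁻¹ * (g ^ s' * Q c))) := by
      rw [pow_add]; group
    have := wlen_mul_le hS ((Q m)⁻¹ * (g ^ s * Q b)) ((Q b)⁻¹ * (g ^ s' * Q c))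
    have := wlen_mul_le hS ((Q m)⁻¹ * (g ^ (s + s') * Q a))⁻¹
      (((Q m)⁻¹ * (g ^ s * Q b)) * ((Q b)⁻¹ * (g ^ s' * Q c)))
    rw [wlen_inv hS, ← e] at this
    omega
  rw [hQ.wlen_inv_mul_eq_dist (by omega) (by omega)] at hac
  simp only [Nat.dist] at hac
  rw [abs_le]
  constructor <;> omega

/-- Pigeonhole: if all small powers `g ^ σ` had small drift, the conjugates
`(Q m)⁻¹ * g ^ σ * Q m` by the midpoint of `Q = [1, g ^ k]` would be distinct elements of a
ball of radius `8δ`. -/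
lemma GroupHyperbolic.exists_lt_abs_wlen_pow_add_sub (hfin : S.Finite)
    (hS : Subgroup.closure S = ⊤) (hD : GroupHyperbolic S D) {g : G} (hg : ¬IsOfFinOrder g)
    {k : ℕ} (hk : 4 * ((2 * S.ncard + 1) ^ (8 * D) * wlen S g) ≤ wlen S (g ^ k)) :
    ∃ σ, 1 ≤ σ ∧ σ ≤ (2 * S.ncard + 1) ^ (8 * D) ∧
      6 * D < |(wlen S (g ^ (σ + k)) : ℤ) - wlen S (g ^ k)| := by
  set N := (2 * S.ncard + 1) ^ (8 * D)
  by_contra! hsmall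
  obtain ⟨Q, hQ⟩ := exists_isDGeodesic hS 1 (g ^ k)
  set m := wlen S (g ^ k) / 2
  have hshort : ∀ σ ≤ N, wlen S ((Q m)⁻¹ * (g ^ σ * Q m)) ≤ 8 * D := by
    intro σ hσ
    obtain rfl | hσ₀ := Nat.eq_zero_or_pos σ
    · simp
    have hσn : wlen S (g ^ σ) ≤ N * wlen S g :=
      (wlen_pow_le hS g σ).trans (Nat.mul_le_mul_right _ hσ)
    have := wlen_pow_add_le hS g σ k
    have := wlen_pow_le_add hS g σ k
    have hdrift := hD.wlen_inv_mul_pow_mul_le hS hQ (s := σ) (u := m) (by omega) (by omega)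
    set b := m + wlen S (g ^ k) - wlen S (g ^ (σ + k))
    have hbm := hQ.wlen_inv_mul_eq_dist (i := b) (j := m) (by omega) (by omega)
    have hσk := abs_le.1 (hsmall σ hσ₀ hσ)
    have := wlen_mul_le hS ((Q m)⁻¹ * (g ^ σ * Q b)) ((Q b)⁻¹ * Q m)
    rw [show (Q m)⁻¹ * (g ^ σ * Q b) * ((Q b)⁻¹ * Q m) = (Q m)⁻¹ * (g ^ σ * Q m) by group,
      hbm] at this
    simp only [Nat.dist] at this
    omega
  obtain ⟨B, hB, hBcard⟩ := exists_finset_wlen_le hfin hS (8 * D)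
  have hinj : Set.InjOn (fun σ => (Q m)⁻¹ * (g ^ σ * Q m)) (Finset.range (N + 1)) :=
    fun a _ b _ hab => injective_pow_iff_not_isOfFinOrder.2 hg
      (mul_right_cancel (mul_left_cancel hab))
  have := Finset.card_le_card_of_injOn _
    (fun σ hσ => hB _ (hshort σ (by simpa [Nat.lt_succ_iff] using hσ))) hinj
  simp only [Finset.card_range] at this
  omega

lemma mul_le_abs_of_abs_sub_sub_le {f : ℕ → ℤ} {c m J : ℕ} (h0 : f 0 = 0)
    (hf : ∀ j < J, |f (j + 1) - f j - f 1| ≤ c) (h1 : c + m ≤ |f 1|) :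
    (m * J : ℤ) ≤ |f J| := by
  wlog hpos : 0 ≤ f 1 generalizing f
  · have key := this (f := fun j => -f j) (by simp [h0])
      (fun j hj => by
        rw [show -f (j + 1) - -f j - -f 1 = -(f (j + 1) - f j - f 1) by ring, abs_neg]
        exact hf j hj)
      (by simpa using h1) (by linarith)
    simpa using key
  rw [abs_of_nonneg hpos] at h1
  have key : ∀ j ≤ J, (m * j : ℤ) ≤ f j := by
    intro j
    induction j with
    | zero => simp [h0]
    | succ j ih =>
      intro hj
      have := (abs_le.1 (hf j hj)).1
      have := ih (by omega)
      push_cast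
      linarith
  exact (key J le_rfl).trans (le_abs_self _)

lemma GroupHyperbolic.exists_le_wlen_pow_mul (hfin : S.Finite) (hS : Subgroup.closure S = ⊤)
    (hD : GroupHyperbolic S D) {g : G} (hg : ¬IsOfFinOrder g) (J : ℕ) :
    ∃ σ, 1 ≤ σ ∧ σ ≤ (2 * S.ncard + 1) ^ (8 * D) ∧ J ≤ wlen S (g ^ (J * σ)) := by
  set N := (2 * S.ncard + 1) ^ (8 * D)
  obtain ⟨k, hk⟩ := exists_lt_wlen_pow hfin hS hg (2 * (J + 2) * (N * wlen S g))
  have h4 : 4 * (N * wlen S g) ≤ 2 * (J + 2) * (N * wlen S g) :=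
    Nat.mul_le_mul_right _ (by omega)
  obtain ⟨σ, hσ₁, hσN, hσ⟩ := hD.exists_lt_abs_wlen_pow_add_sub hfin hS hg (k := k)
    (h4.trans hk.le)
  refine ⟨σ, hσ₁, hσN, ?_⟩
  replace hσN : σ ≤ N := hσN
  have hlen : ∀ j ≤ J, j * σ * wlen S g ≤ J * (N * wlen S g) := fun j hj => by
    rw [← Nat.mul_assoc]; exact Nat.mul_le_mul_right _ (Nat.mul_le_mul hj hσN)
  have h2J : 2 * (J * (N * wlen S g)) ≤ 2 * (J + 2) * (N * wlen S g) := by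
    rw [← Nat.mul_assoc]; exact Nat.mul_le_mul_right _ (by omega)
  have hlin := mul_le_abs_of_abs_sub_sub_le (m := 1) (c := 6 * D) (J := J)
    (f := fun j => (wlen S (g ^ (j * σ + k)) : ℤ) - wlen S (g ^ k)) (by simp)
    (fun j hj => by
      have := hlen (j + 1) hj
      rw [add_one_mul, add_mul] at this
      have := wlen_pow_le hS g (j * σ)
      have := wlen_pow_le hS g σ
      have := hD.abs_wlen_pow_add_sub_le hS g (k := k) (s := j * σ) (s' := σ) (by omega)
      rw [← abs_neg]
      convert this using 2
      · simp only [add_one_mul, one_mul]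
        ring
      · push_cast; rfl)
    (by simpa using hσ)
  have := wlen_pow_add_le hS g (J * σ) k
  have := wlen_pow_le_add hS g (J * σ) k
  have hJσ : |(wlen S (g ^ (J * σ + k)) : ℤ) - wlen S (g ^ k)| ≤ wlen S (g ^ (J * σ)) :=
    abs_sub_le_iff.2 ⟨by omega, by omega⟩
  exact_mod_cast (by simpa using hlin.trans hJσ : (J : ℤ) ≤ wlen S (g ^ (J * σ)))

lemma exists_add_lt_of_add_mul_lt {f : ℕ → ℕ} {c P : ℕ} (h : f 0 + P * c < f P) :
    ∃ i < P, f i + c < f (i + 1) := by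
  by_contra! hf
  have key : ∀ i ≤ P, f i ≤ f 0 + i * c := by
    intro i
    induction i with
    | zero => simp
    | succ i ih => intro hi; have := hf i (by omega); have := ih (by omega); rw [add_one_mul]; omega
  exact absurd (key P le_rfl) (by omega)

/-- `N * 2 ^ P`, where `N` bounds the size of a ball of radius `8δ` and `P` is chosen so that
`N n + P (6δ + 4) < 2 ^ P`. -/
def powerBound (m D n : ℕ) : ℕ :=
  (2 * m + 1) ^ (8 * D) * 2 ^ ((6 * D + 4) ^ 2 + (2 * m + 1) ^ (8 * D) * n + (6 * D + 4))

lemma add_mul_lt_two_pow (a C : ℕ) : a + (C ^ 2 + a + C) * C < 2 ^ (C ^ 2 + a + C) := by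
  have h₁ : C ^ 2 + a + 1 ≤ 2 ^ (C ^ 2 + a) := Nat.lt_two_pow_self
  have h₂ : C + 1 ≤ 2 ^ C := Nat.lt_two_pow_self
  have := Nat.mul_le_mul h₁ h₂
  rw [← pow_add] at this
  nlinarith

/-- `k = 2 ^ i σ` where `|g ^ (j σ)| ≥ j` for `j = 2 ^ P`: the lengths `|g ^ (2 ^ i σ)|` cannot
grow by at most `6δ + 4` at each of the `P` doublings. -/
lemma GroupHyperbolic.exists_wlen_pow_add_lt_wlen_pow_two_mul (hfin : S.Finite)
    (hS : Subgroup.closure S = ⊤) (hD : GroupHyperbolic S D) {g : G} (hg : ¬IsOfFinOrder g) :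
    ∃ k, 1 ≤ k ∧ k ≤ powerBound S.ncard D (wlen S g) ∧
      wlen S (g ^ k) + (6 * D + 4) < wlen S (g ^ (2 * k)) := by
  have hP := add_mul_lt_two_pow ((2 * S.ncard + 1) ^ (8 * D) * wlen S g) (6 * D + 4)
  set N := (2 * S.ncard + 1) ^ (8 * D)
  set P := (6 * D + 4) ^ 2 + N * wlen S g + (6 * D + 4)
  obtain ⟨σ, hσ₁, hσN, hσ⟩ := hD.exists_le_wlen_pow_mul hfin hS hg (2 ^ P)
  replace hσN : σ ≤ N := hσN
  have hσn : wlen S (g ^ σ) ≤ N * wlen S g :=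
    (wlen_pow_le hS g σ).trans (Nat.mul_le_mul_right _ hσN)
  obtain ⟨i, hiP, hi⟩ := exists_add_lt_of_add_mul_lt (f := fun i => wlen S (g ^ (2 ^ i * σ)))
    (c := 6 * D + 4) (P := P) (by simp only [pow_zero, one_mul]; omega)
  refine ⟨2 ^ i * σ, Nat.one_le_iff_ne_zero.2 (by positivity), ?_, ?_⟩
  · exact (Nat.mul_le_mul (Nat.pow_le_pow_right two_pos hiP.le) hσN).trans_eq (Nat.mul_comm _ _)
  · simpa [pow_succ, mul_comm, mul_left_comm, mul_assoc] using hi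

lemma wlen_pow_add_wlen_pow_le_of_conj (hS : Subgroup.closure S = ⊤) {x u : G} {c : ℕ}
    (h : ∀ a b, wlen S ((u⁻¹ * x * u) ^ a) + wlen S ((u⁻¹ * x * u) ^ b) ≤
      wlen S ((u⁻¹ * x * u) ^ (a + b)) + c) (a b : ℕ) :
    wlen S (x ^ a) + wlen S (x ^ b) ≤ wlen S (x ^ (a + b)) + (c + 6 * wlen S u) := by
  have hconj : ∀ r : ℕ, (u⁻¹ * x * u) ^ r = u⁻¹ * x ^ r * u := fun r => by
    simpa using conj_pow (a := u⁻¹) (b := x) (i := r)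
  have := h a b
  rw [hconj, hconj, hconj] at this
  have := wlen_le_conj hS u (x ^ a)
  have := wlen_le_conj hS u (x ^ b)
  have := wlen_conj_le hS u (x ^ (a + b))
  omega

lemma wlen_pow_add_wlen_pow_le_of_pow (hS : Subgroup.closure S = ⊤) {g : G} {k c : ℕ}
    (hk : 0 < k) (h : ∀ a b, wlen S (g ^ (k * a)) + wlen S (g ^ (k * b)) ≤
      wlen S (g ^ (k * (a + b))) + c) (s t : ℕ) :
    wlen S (g ^ s) + wlen S (g ^ t) ≤ wlen S (g ^ (s + t)) + (c + 4 * (k * wlen S g)) := by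
  have hrem : ∀ r, r < k → wlen S (g ^ r) ≤ k * wlen S g := fun r hr =>
    (wlen_pow_le hS g r).trans (Nat.mul_le_mul_right _ hr.le)
  have hs := wlen_pow_add_le hS g (k * (s / k)) (s % k)
  have ht := wlen_pow_add_le hS g (k * (t / k)) (t % k)
  have hst := wlen_pow_le_add hS g (s % k + t % k) (k * (s / k + t / k))
  rw [Nat.div_add_mod] at hs ht
  rw [show s % k + t % k + k * (s / k + t / k) = s + t by
    rw [Nat.mul_add]; have := Nat.div_add_mod s k; have := Nat.div_add_mod t k; omega] at hst
  have := hrem _ (Nat.mod_lt s hk)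
  have := hrem _ (Nat.mod_lt t hk)
  have := wlen_pow_add_le hS g (s % k) (t % k)
  have := h (s / k) (t / k)
  omega

/-- `2 * defectBound` pays for the defect `6δ + 6` of the conjugate `u⁻¹ g ^ k u`, for `6 |u|`
when conjugating back, and for `4 k |g|` when passing from `g ^ k` to `g`; here
`|u| ≤ k |g| ≤ powerBound * |g|`. -/
def defectBound (D m n : ℕ) : ℕ := 5 * (powerBound m D n * n) + 3 * D + 3

theorem GroupHyperbolic.wlen_pow_add_wlen_pow_le_of_not_isOfFinOrder (hfin : S.Finite)
    (hS : Subgroup.closure S = ⊤) (hD : GroupHyperbolic S D) {g : G} (hg : ¬IsOfFinOrder g)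
    (s t : ℕ) :
    wlen S (g ^ s) + wlen S (g ^ t) ≤
      wlen S (g ^ (s + t)) + 2 * defectBound D S.ncard (wlen S g) := by
  obtain ⟨k, hk₁, hkK, hk⟩ := hD.exists_wlen_pow_add_lt_wlen_pow_two_mul hfin hS hg
  obtain ⟨u, hu, hylong, hysq⟩ := exists_conj_straight hS hD (x := g ^ k)
    (by rwa [← pow_mul, Nat.mul_comm k 2])
  have hx := wlen_pow_add_wlen_pow_le_of_conj hS (wlen_pow_add_wlen_pow_le hS hD hylong hysq)
  have := wlen_pow_add_wlen_pow_le_of_pow hS hk₁ (fun a b => by simpa [pow_mul] using hx a b) s t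
  have := hu.trans (wlen_pow_le hS g k)
  have : k * wlen S g ≤ powerBound S.ncard D (wlen S g) * wlen S g := Nat.mul_le_mul_right _ hkK
  unfold defectBound
  omega

/-- (Corollary 2.15 of the paper.)  For `g` of infinite order there is
`μ = μ(δ, ♯S, |g|) ≥ 0` with `|g^{s+t}| ≥ |g^s| + |g^t| - 2μ` for all `s, t : ℕ`. -/
theorem stmt7 :
    ∃ μ : ℝ → ℕ → ℕ → ℝ,
      (∀ δ m n, 0 ≤ μ δ m n) ∧
      ∀ (H : Type) [Group H] (S : Set H) (δ : ℝ),
        S.Finite → Subgroup.closure S = ⊤ → 0 ≤ δ → GroupHyperbolic S δ →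
        ∀ g : H, ¬ IsOfFinOrder g →
          ∀ s t : ℕ,
            (wlen S (g ^ (s + t)) : ℝ) ≥
              (wlen S (g ^ s) : ℝ) + (wlen S (g ^ t) : ℝ)
                - 2 * μ δ S.ncard (wlen S g) := by
  refine ⟨fun δ m n => defectBound ⌊δ⌋₊ m n, fun _ _ _ => Nat.cast_nonneg _, ?_⟩
  intro H _ S δ hfin hS _ hδ g hg s t
  have := Nat.cast_le (α := ℝ).2
    (hδ.natFloor.wlen_pow_add_wlen_pow_le_of_not_isOfFinOrder hfin hS hg s t)
  push_cast at this
  linarith
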